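/- arXiv:1702.02186 — 2 statements merged into one kernel-verified Lean document; each statement's English description precedes it below -/
import Mathlib

section
/- Let V ⊆ ℂⁿ be a closed irreducible algebraic subvariety, and suppose there exists a nonzero vector v ∈ ℂⁿ and infinitely many integers m such that V + m·v = V (V is invariant under translation by m·v for infinitely many m ∈ ℤ). If dim V = 1, then V is an affine line with direction v. -/
noncomputable def expMap (n : ℕ) : (Fin n → ℂ) → (Fin n → ℂˣ) :=
  fun z i => Units.mk0 (Complex.exp (2 * Real.pi * Complex.I * z i)) (Complex.exp_ne_zero _)

/-- Coercion from `(ℂ*)ⁿ` to `ℂⁿ`. -/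
def uCoe (n : ℕ) : (Fin n → ℂˣ) → (Fin n → ℂ) := fun x i => (x i : ℂ)

/-- An algebraic subset of the affine space `ℂⁿ`: the zero locus of an ideal of polynomials. -/
def IsAlgSet {n : ℕ} (V : Set (Fin n → ℂ)) : Prop :=
  ∃ I : Ideal (MvPolynomial (Fin n) ℂ), V = MvPolynomial.zeroLocus ℂ I

/-- An algebraic subset of the torus `(ℂ*)ⁿ`: the trace on `(ℂ*)ⁿ` of an algebraic subset of
`ℂⁿ` (equivalently, the zero locus of a family of Laurent polynomials). -/
def IsAlgSetT {n : ℕ} (W : Set (Fin n → ℂˣ)) : Prop :=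
  ∃ I : Ideal (MvPolynomial (Fin n) ℂ), W = uCoe n ⁻¹' MvPolynomial.zeroLocus ℂ I

/-- An irreducible algebraic subvariety of `ℂⁿ`. -/
def IsIrredAlgSet {n : ℕ} (V : Set (Fin n → ℂ)) : Prop :=
  IsAlgSet V ∧ V.Nonempty ∧
    ∀ V₁ V₂ : Set (Fin n → ℂ), IsAlgSet V₁ → IsAlgSet V₂ → V = V₁ ∪ V₂ → V = V₁ ∨ V = V₂

/-- An irreducible algebraic subvariety of `(ℂ*)ⁿ`. -/
def IsIrredAlgSetT {n : ℕ} (W : Set (Fin n → ℂˣ)) : Prop :=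
  IsAlgSetT W ∧ W.Nonempty ∧
    ∀ W₁ W₂ : Set (Fin n → ℂˣ), IsAlgSetT W₁ → IsAlgSetT W₂ → W = W₁ ∪ W₂ → W = W₁ ∨ W = W₂

/-- Dimension of an algebraic set: the Krull dimension of the poset of irreducible algebraic
subsets contained in it. -/
noncomputable def algDim {n : ℕ} (V : Set (Fin n → ℂ)) : WithBot ℕ∞ :=
  Order.krullDim {W : Set (Fin n → ℂ) // IsIrredAlgSet W ∧ W ⊆ V}

noncomputable def algDimT {n : ℕ} (W : Set (Fin n → ℂˣ)) : WithBot ℕ∞ :=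
  Order.krullDim {W' : Set (Fin n → ℂˣ) // IsIrredAlgSetT W' ∧ W' ⊆ W}

/-- A linear subspace of `ℂⁿ` spanned by integer (equivalently, rational) vectors. -/
def IsIntSpanned {n : ℕ} (L : Submodule ℂ (Fin n → ℂ)) : Prop :=
  ∃ S : Set (Fin n → ℂ), (∀ v ∈ S, ∀ i, ∃ m : ℤ, v i = (m : ℂ)) ∧ L = Submodule.span ℂ S

/-- A subtorus of `(ℂ*)ⁿ`: the image under `exp` of a linear subspace of `ℂⁿ` spanned by
integer vectors; equivalently, an algebraic subgroup isomorphic to some `(ℂ*)ᵖ`. -/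
def IsSubtorus {n : ℕ} (T : Set (Fin n → ℂˣ)) : Prop :=
  ∃ L : Submodule ℂ (Fin n → ℂ), IsIntSpanned L ∧ T = expMap n '' (L : Set (Fin n → ℂ))

/-!
The line through a point `a ∈ V` with direction `v` meets `V` in the infinitely many points
`a + m • v`; a polynomial vanishing at infinitely many points of a line vanishes on all of it, so
this line lies in `V`. It is an irreducible algebraic set strictly containing `{a}`, so if it were
strictly contained in `V` the chain `{a} ⊂ line ⊂ V` would give `V` dimension at least `2`.
-/

open MvPolynomial

theorem MvPolynomial.eval_add_smul_eq_zero_of_infinite {R σ : Type*} [CommRing R] [IsDomain R]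
    (p : MvPolynomial σ R) {a v : σ → R} (h : {t : R | eval (a + t • v) p = 0}.Infinite)
    (t : R) : eval (a + t • v) p = 0 := by
  set q : Polynomial R :=
    eval₂ Polynomial.C (fun i => Polynomial.C (a i) + Polynomial.C (v i) * Polynomial.X) p
  have hq : ∀ s, q.eval s = eval (a + s • v) p := fun s => by
    have : (Polynomial.evalRingHom s).comp Polynomial.C = RingHom.id R := by ext; simp
    simp only [q, polynomial_eval_eval₂, this]
    congr 1
    funext i
    simp only [Polynomial.eval_add, Polynomial.eval_mul, Polynomial.eval_C, Polynomial.eval_X,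
      Pi.add_apply, Pi.smul_apply, smul_eq_mul, mul_comm]
  have hq0 : q = 0 := q.eq_zero_of_infinite_isRoot (by simpa [Polynomial.IsRoot, hq] using h)
  simpa [hq0] using (hq t).symm

theorem infinite_setOf_add_smul_mem {K E : Type*} [Ring K] [CharZero K] [AddCommMonoid E]
    [Module K E] {V : Set E} {a v : E}
    (hinv : {m : ℤ | (fun x => x + (m : K) • v) '' V = V}.Infinite) (ha : a ∈ V) :
    {t : K | a + t • v ∈ V}.Infinite := by
  refine (hinv.image Int.cast_injective.injOn).mono ?_
  rintro _ ⟨m, hm, rfl⟩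
  exact (Set.ext_iff.1 hm _).1 ⟨a, ha, rfl⟩

theorem Set.eq_or_eq_of_singleton_eq_union {α : Type*} {a : α} {s t : Set α}
    (h : {a} = s ∪ t) : {a} = s ∨ {a} = t := by
  have hs : s ⊆ {a} := h ▸ Set.subset_union_left
  have ht : t ⊆ {a} := h ▸ Set.subset_union_right
  rcases (h ▸ Set.mem_singleton a : a ∈ s ∪ t) with ha | ha
  · exact Or.inl (Set.Subset.antisymm (Set.singleton_subset_iff.2 ha) hs)
  · exact Or.inr (Set.Subset.antisymm (Set.singleton_subset_iff.2 ha) ht)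

variable {n : ℕ}

def affineLine (a v : Fin n → ℂ) : Set (Fin n → ℂ) := {x | ∃ t : ℂ, x = a + t • v}

theorem left_mem_affineLine (a v : Fin n → ℂ) : a ∈ affineLine a v := ⟨0, by simp⟩

theorem IsAlgSet.affineLine_subset_of_infinite {W : Set (Fin n → ℂ)} (hW : IsAlgSet W)
    {a v : Fin n → ℂ} (h : {t : ℂ | a + t • v ∈ W}.Infinite) : affineLine a v ⊆ W := by
  obtain ⟨I, rfl⟩ := hW
  rintro _ ⟨t, rfl⟩ p hp
  refine p.eval_add_smul_eq_zero_of_infinite (h.mono fun s hs => ?_) t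
  exact hs p hp

theorem singleton_ssubset_affineLine (a : Fin n → ℂ) {v : Fin n → ℂ} (hv : v ≠ 0) :
    {a} ⊂ affineLine a v := by
  refine (Set.ssubset_iff_of_subset (Set.singleton_subset_iff.2 (left_mem_affineLine a v))).2
    ⟨a + v, ⟨1, by simp⟩, ?_⟩
  simpa using hv

theorem isAlgSet_singleton (a : Fin n → ℂ) : IsAlgSet {a} := by
  refine ⟨Ideal.span (Set.range fun i => X i - C (a i)), ?_⟩
  ext x
  simp only [zeroLocus_span, Set.mem_ofPred_eq, Set.forall_mem_range, aeval_eq_eval, map_sub,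
    eval_X, eval_C, sub_eq_zero, Set.mem_singleton_iff, funext_iff]

theorem isAlgSet_affineLine (a : Fin n → ℂ) {v : Fin n → ℂ} (hv : v ≠ 0) :
    IsAlgSet (affineLine a v) := by
  obtain ⟨i, hi⟩ : ∃ i, v i ≠ 0 := Function.ne_iff.1 hv
  -- the `2 × 2` minors of the matrix with columns `x - a` and `v`
  refine ⟨Ideal.span (Set.range fun j =>
    C (v i) * (X j - C (a j)) - C (v j) * (X i - C (a i))), ?_⟩
  ext x
  simp only [zeroLocus_span, Set.mem_ofPred_eq, Set.forall_mem_range, aeval_eq_eval, map_sub,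
    map_mul, eval_X, eval_C, sub_eq_zero]
  constructor
  · rintro ⟨t, rfl⟩ j
    simp only [Pi.add_apply, Pi.smul_apply, smul_eq_mul]
    ring
  · intro h
    refine ⟨(x i - a i) / v i, funext fun j => ?_⟩
    simp only [Pi.add_apply, Pi.smul_apply, smul_eq_mul]
    field_simp
    linear_combination h j

theorem isIrredAlgSet_singleton (a : Fin n → ℂ) : IsIrredAlgSet {a} :=
  ⟨isAlgSet_singleton a, Set.singleton_nonempty a,
    fun _ _ _ _ h => Set.eq_or_eq_of_singleton_eq_union h⟩

theorem isIrredAlgSet_affineLine (a : Fin n → ℂ) {v : Fin n → ℂ} (hv : v ≠ 0) :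
    IsIrredAlgSet (affineLine a v) := by
  refine ⟨isAlgSet_affineLine a hv, ⟨a, left_mem_affineLine a v⟩, fun V₁ V₂ h₁ h₂ h => ?_⟩
  have hcover : {t : ℂ | a + t • v ∈ V₁} ∪ {t : ℂ | a + t • v ∈ V₂} = Set.univ :=
    Set.eq_univ_of_forall fun t => (h ▸ ⟨t, rfl⟩ : a + t • v ∈ V₁ ∪ V₂)
  rcases Set.infinite_union.1 (hcover ▸ Set.infinite_univ) with hinf | hinf
  · exact Or.inl ((h₁.affineLine_subset_of_infinite hinf).antisymm (h ▸ Set.subset_union_left))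
  · exact Or.inr ((h₂.affineLine_subset_of_infinite hinf).antisymm (h ▸ Set.subset_union_right))

/-- A closed irreducible algebraic curve `V ⊆ ℂⁿ` invariant under translation by `m • v` for
infinitely many integers `m` (with `v ≠ 0`) is an affine line with direction `v`. -/
theorem invariant_curve_is_line {n : ℕ} (V : Set (Fin n → ℂ)) (v : Fin n → ℂ) (hv : v ≠ 0)
    (hV : IsIrredAlgSet V) (hdim : algDim V = 1)
    (hinv : {m : ℤ | (fun x => x + (m : ℂ) • v) '' V = V}.Infinite) :
    ∃ a : Fin n → ℂ, V = {x | ∃ t : ℂ, x = a + t • v} := by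
  obtain ⟨a, ha⟩ := hV.2.1
  have hline : affineLine a v ⊆ V :=
    hV.1.affineLine_subset_of_infinite (infinite_setOf_add_smul_mem hinv ha)
  rcases hline.eq_or_ssubset with heq | hlt
  · exact ⟨a, heq.symm⟩
  let P : Type := {W : Set (Fin n → ℂ) // IsIrredAlgSet W ∧ W ⊆ V}
  let point : P := ⟨{a}, isIrredAlgSet_singleton a, Set.singleton_subset_iff.2 ha⟩
  let line : P := ⟨affineLine a v, isIrredAlgSet_affineLine a hv, hline⟩
  let whole : P := ⟨V, hV, subset_rfl⟩
  rcases Order.krullDim_le_one_iff.1 hdim.le line with hmin | hmax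
  · exact (hmin.not_lt (b := point) (singleton_ssubset_affineLine a hv)).elim
  · exact (hmax.not_lt (b := whole) hlt).elim
end

section
/- Let (Λ, W, F) be a 1-Hodge structure and let Λ' ⊆ Λ be a subgroup such that Λ/Λ' is torsion-free and (Λ', W' = W ∩ Λ'_ℚ, F' = F ∩ Λ'_ℂ) is again a 1-Hodge structure. Then the quotient data (Λ/Λ', W/W', F/F') — where W/W' is the image of W in (Λ/Λ')_ℚ and F/F' is the image of F in (Λ/Λ')_ℂ — again satisfies the axioms of a 1-Hodge structure. -/
/-- The complex conjugate of a subspace of `ℂᵏ` (with respect to the real structure). -/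
noncomputable def conjSub {k : ℕ} (M : Submodule ℂ (Fin k → ℂ)) : Submodule ℂ (Fin k → ℂ) :=
  Submodule.span ℂ ((fun x : Fin k → ℂ => fun i => (starRingEnd ℂ) (x i)) '' (M : Set (Fin k → ℂ)))

/-- The `ℂ`-span in `ℂᵏ` of a `ℚ`-subspace of `ℚᵏ`. -/
noncomputable def ratSpan {k : ℕ} (Q : Submodule ℚ (Fin k → ℚ)) : Submodule ℂ (Fin k → ℂ) :=
  Submodule.span ℂ ((fun q : Fin k → ℚ => fun i => ((q i : ℚ) : ℂ)) '' (Q : Set (Fin k → ℚ)))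

/-- Points of the integral lattice `ℤᵏ ⊂ ℂᵏ`. -/
def IsLatticePt {k : ℕ} (x : Fin k → ℂ) : Prop := ∀ i, ∃ m : ℤ, x i = (m : ℂ)

def cc {k : ℕ} (x : Fin k → ℂ) : Fin k → ℂ := fun i => (starRingEnd ℂ) (x i)

lemma cc_cc {k : ℕ} (x : Fin k → ℂ) : cc (cc x) = x := by
  funext i; simp [cc]

lemma cc_add {k : ℕ} (x y : Fin k → ℂ) : cc (x + y) = cc x + cc y := by
  funext i; simp [cc]

lemma cc_sub {k : ℕ} (x y : Fin k → ℂ) : cc (x - y) = cc x - cc y := by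
  funext i; simp [cc]

lemma cc_smul {k : ℕ} (a : ℂ) (x : Fin k → ℂ) : cc (a • x) = (starRingEnd ℂ a) • cc x := by
  funext i; simp [cc]

/-- The image of a submodule under `cc` is a submodule. -/
noncomputable def ccSub {k : ℕ} (M : Submodule ℂ (Fin k → ℂ)) : Submodule ℂ (Fin k → ℂ) where
  carrier := cc '' M
  zero_mem' := ⟨0, M.zero_mem, by funext i; simp [cc]⟩
  add_mem' := by
    rintro _ _ ⟨a, ha, rfl⟩ ⟨b, hb, rfl⟩
    exact ⟨a + b, M.add_mem ha hb, (cc_add a b)⟩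
  smul_mem' := by
    rintro c _ ⟨a, ha, rfl⟩
    refine ⟨(starRingEnd ℂ c) • a, M.smul_mem _ ha, ?_⟩
    rw [cc_smul]; simp

lemma conjSub_eq {k : ℕ} (M : Submodule ℂ (Fin k → ℂ)) : conjSub M = ccSub M := by
  rw [conjSub, show (fun x : Fin k → ℂ => fun i => (starRingEnd ℂ) (x i)) = cc from rfl]
  exact Submodule.span_eq (ccSub M)

lemma mem_conjSub {k : ℕ} {M : Submodule ℂ (Fin k → ℂ)} {x : Fin k → ℂ} :
    x ∈ conjSub M ↔ cc x ∈ M := by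
  rw [conjSub_eq]
  constructor
  · rintro ⟨a, ha, rfl⟩; rwa [cc_cc]
  · intro h; exact ⟨cc x, h, cc_cc x⟩

lemma cc_mem_ratSpan {k : ℕ} {Q : Submodule ℚ (Fin k → ℚ)} {x : Fin k → ℂ}
    (hx : x ∈ ratSpan Q) : cc x ∈ ratSpan Q := by
  induction hx using Submodule.span_induction with
  | mem s hs =>
    obtain ⟨q, hq, rfl⟩ := hs
    have : cc (fun i => ((q i : ℚ) : ℂ)) = fun i => ((q i : ℚ) : ℂ) := by
      funext i; simp [cc]
    rw [this]
    exact Submodule.subset_span ⟨q, hq, rfl⟩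
  | zero => rw [show cc (0 : Fin k → ℂ) = 0 by funext i; simp [cc]]; exact Submodule.zero_mem _
  | add a b _ _ ha hb => rw [cc_add]; exact Submodule.add_mem _ ha hb
  | smul c a _ ha => rw [cc_smul]; exact Submodule.smul_mem _ _ ha
lemma single_decomp {k : ℕ} (x : Fin k → ℂ) : x = ∑ j, x j • (Pi.single j 1 : Fin k → ℂ) := by
  have h : ∀ j : Fin k, x j • (Pi.single j 1 : Fin k → ℂ) = Pi.single j (x j) := by
    intro j; funext i
    by_cases hi : i = j
    · subst hi; simp
    · simp [Pi.single_eq_of_ne hi]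
  simp_rw [h]
  exact (Finset.univ_sum_single x).symm

lemma single_lattice {k : ℕ} (j : Fin k) : IsLatticePt ((Pi.single j 1 : Fin k → ℂ)) := by
  intro i
  by_cases h : i = j
  · subst h; exact ⟨1, by simp⟩
  · exact ⟨0, by simp [Pi.single_eq_of_ne h]⟩
section
variable {n m : ℕ} (π : (Fin n → ℂ) →ₗ[ℂ] (Fin m → ℂ))

lemma pi_cc (hπlat : ∀ x : Fin n → ℂ, IsLatticePt x → IsLatticePt (π x))
    (x : Fin n → ℂ) : π (cc x) = cc (π x) := by
  have hreal : ∀ (j : Fin n) (i : Fin m),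
      (starRingEnd ℂ) (π (Pi.single j 1 : Fin n → ℂ) i) = π (Pi.single j 1 : Fin n → ℂ) i := by
    intro j i
    obtain ⟨mm, hm⟩ := hπlat _ (single_lattice j) i
    rw [hm]; simp
  conv_lhs => rw [show cc x = ∑ j, (starRingEnd ℂ) (x j) • (Pi.single j 1 : Fin n → ℂ) by
    have := single_decomp (cc x)
    simpa [cc] using this]
  rw [map_sum]
  conv_rhs => rw [show x = ∑ j, x j • (Pi.single j 1 : Fin n → ℂ) from single_decomp x, map_sum]
  funext i
  simp only [Finset.sum_apply, cc, map_sum, map_smul, Pi.smul_apply, smul_eq_mul, map_mul, hreal]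

lemma pi_surj (hπsurj : ∀ y : Fin m → ℂ, IsLatticePt y → ∃ x : Fin n → ℂ, IsLatticePt x ∧ π x = y) :
    LinearMap.range π = ⊤ := by
  rw [eq_top_iff]
  intro y _
  rw [single_decomp y]
  apply Submodule.sum_mem
  intro j _
  apply Submodule.smul_mem
  obtain ⟨x, -, hx⟩ := hπsurj _ (single_lattice j)
  exact ⟨x, hx⟩

lemma map_conjSub (hπlat : ∀ x : Fin n → ℂ, IsLatticePt x → IsLatticePt (π x))
    (M : Submodule ℂ (Fin n → ℂ)) :
    Submodule.map π (conjSub M) = conjSub (Submodule.map π M) := by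
  ext y
  simp only [Submodule.mem_map]
  rw [mem_conjSub]
  simp only [Submodule.mem_map]
  constructor
  · rintro ⟨f, hf, rfl⟩
    rw [show (f ∈ conjSub M) = (cc f ∈ M) from propext mem_conjSub] at hf
    exact ⟨cc f, hf, by rw [pi_cc π hπlat]⟩
  · rintro ⟨f, hf, hfy⟩
    refine ⟨cc f, ?_, ?_⟩
    · rw [show (cc f ∈ conjSub M) = (cc (cc f) ∈ M) from propext mem_conjSub, cc_cc]; exact hf
    · rw [pi_cc π hπlat, hfy, cc_cc]

end
/-- Quotient of a 1-Hodge structure by a sub 1-Hodge structure is again a 1-Hodge structure.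
Here `Λ = ℤⁿ`, the sub 1-Hodge structure has lattice `Λ' = Λ ∩ U` (so `Λ/Λ'` is torsion-free),
and the quotient `Λ/Λ' = ℤᵐ` is realized by a linear map `π : ℂⁿ → ℂᵐ` carrying the lattice
onto the lattice with kernel `U_ℂ`. The quotient data `(W'', F'') = (π(W_ℂ), π(F))` again
satisfies the axioms of a 1-Hodge structure. -/
theorem quotient_one_hodge_structure {n m : ℕ}
    (Wq Uq : Submodule ℚ (Fin n → ℚ)) (F : Submodule ℂ (Fin n → ℂ))
    (π : (Fin n → ℂ) →ₗ[ℂ] (Fin m → ℂ))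
    (hπlat : ∀ x : Fin n → ℂ, IsLatticePt x → IsLatticePt (π x))
    (hπsurj : ∀ y : Fin m → ℂ, IsLatticePt y → ∃ x : Fin n → ℂ, IsLatticePt x ∧ π x = y)
    (hπker : LinearMap.ker π = ratSpan Uq)
    -- the ambient data is a 1-Hodge structure:
    (h1 : ratSpan Wq = (ratSpan Wq ⊓ F) ⊔ (ratSpan Wq ⊓ conjSub F))
    (h2 : Disjoint (ratSpan Wq ⊓ F) (ratSpan Wq ⊓ conjSub F))
    (h3 : (⊤ : Submodule ℂ (Fin n → ℂ)) = ratSpan Wq ⊔ F)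
    -- `(Λ ∩ U, W ∩ U, F ∩ U)` is a sub 1-Hodge structure:
    (h4 : ratSpan Wq ⊓ ratSpan Uq =
      ((ratSpan Wq ⊓ ratSpan Uq) ⊓ (F ⊓ ratSpan Uq)) ⊔
        ((ratSpan Wq ⊓ ratSpan Uq) ⊓ conjSub (F ⊓ ratSpan Uq)))
    (h5 : Disjoint ((ratSpan Wq ⊓ ratSpan Uq) ⊓ (F ⊓ ratSpan Uq))
      ((ratSpan Wq ⊓ ratSpan Uq) ⊓ conjSub (F ⊓ ratSpan Uq)))
    (h6 : ratSpan Uq = (ratSpan Wq ⊓ ratSpan Uq) ⊔ (F ⊓ ratSpan Uq)) :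
    (Submodule.map π (ratSpan Wq) =
        (Submodule.map π (ratSpan Wq) ⊓ Submodule.map π F) ⊔
          (Submodule.map π (ratSpan Wq) ⊓ conjSub (Submodule.map π F))) ∧
    Disjoint (Submodule.map π (ratSpan Wq) ⊓ Submodule.map π F)
      (Submodule.map π (ratSpan Wq) ⊓ conjSub (Submodule.map π F)) ∧
    (⊤ : Submodule ℂ (Fin m → ℂ)) = Submodule.map π (ratSpan Wq) ⊔ Submodule.map π F := by
  have hconjF : conjSub (Submodule.map π F) = Submodule.map π (conjSub F) :=
    (map_conjSub π hπlat F).symm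
  have hker : ∀ u : Fin n → ℂ, u ∈ ratSpan Uq → π u = 0 := by
    intro u hu
    rw [← hπker] at hu
    exact hu
  refine ⟨?_, ?_, ?_⟩
  · -- first axiom
    rw [hconjF]
    apply le_antisymm
    · rintro x ⟨w, hw, rfl⟩
      rw [h1] at hw
      obtain ⟨a, ha, b, hb, rfl⟩ := Submodule.mem_sup.mp hw
      obtain ⟨haW, haF⟩ := Submodule.mem_inf.mp ha
      obtain ⟨hbW, hbG⟩ := Submodule.mem_inf.mp hb
      rw [map_add]
      exact Submodule.add_mem_sup
        (Submodule.mem_inf.mpr ⟨⟨a, haW, rfl⟩, ⟨a, haF, rfl⟩⟩)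
        (Submodule.mem_inf.mpr ⟨⟨b, hbW, rfl⟩, ⟨b, hbG, rfl⟩⟩)
    · exact sup_le inf_le_left inf_le_left
  · -- disjointness
    rw [hconjF, disjoint_iff, eq_bot_iff]
    intro x hx
    obtain ⟨hx1, hx2⟩ := Submodule.mem_inf.mp hx
    obtain ⟨hxW, hxF⟩ := Submodule.mem_inf.mp hx1
    obtain ⟨hxW', hxG⟩ := Submodule.mem_inf.mp hx2
    obtain ⟨w, hw, hwx⟩ := hxW
    obtain ⟨f, hf, hfx⟩ := hxF
    obtain ⟨w', hw', hw'x⟩ := hxW'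
    obtain ⟨g, hg, hgx⟩ := hxG
    -- Step 1: replace (w, f) by a single element a ∈ W ⊓ F with π a = x
    have hwf : w - f ∈ ratSpan Uq := by
      rw [← hπker, LinearMap.mem_ker, map_sub, hwx, hfx, sub_self]
    obtain ⟨u1, hu1, u2, hu2, huu⟩ := Submodule.mem_sup.mp (h6 ▸ hwf)
    obtain ⟨hu1W, hu1U⟩ := Submodule.mem_inf.mp hu1
    obtain ⟨hu2F, hu2U⟩ := Submodule.mem_inf.mp hu2
    have haF : w - u1 ∈ ratSpan Wq ⊓ F := by
      refine Submodule.mem_inf.mpr ⟨Submodule.sub_mem _ hw hu1W, ?_⟩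
      have : w - u1 = f + u2 := by
        have := huu
        rw [eq_comm, sub_eq_iff_eq_add] at this
        rw [this]; abel
      rw [this]
      exact Submodule.add_mem _ hf hu2F
    have hax : π (w - u1) = x := by
      rw [map_sub, hwx, hker u1 hu1U, sub_zero]
    -- Step 2: replace (w', g) by a single element b ∈ W ⊓ conjSub F with π b = x
    have hwg : w' - g ∈ ratSpan Uq := by
      rw [← hπker, LinearMap.mem_ker, map_sub, hw'x, hgx, sub_self]
    have hccwg : cc (w' - g) ∈ ratSpan Uq := cc_mem_ratSpan hwg
    obtain ⟨s, hs, t, ht, hst⟩ := Submodule.mem_sup.mp (h6 ▸ hccwg)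
    obtain ⟨hsW, hsU⟩ := Submodule.mem_inf.mp hs
    obtain ⟨htF, htU⟩ := Submodule.mem_inf.mp ht
    have hdecomp : w' - g = cc s + cc t := by
      rw [← cc_add, hst, cc_cc]
    have hv1W : cc s ∈ ratSpan Wq := cc_mem_ratSpan hsW
    have hv1U : cc s ∈ ratSpan Uq := cc_mem_ratSpan hsU
    have hv2G : cc t ∈ conjSub F := mem_conjSub.mpr (by rw [cc_cc]; exact htF)
    have hbG : w' - cc s ∈ ratSpan Wq ⊓ conjSub F := by
      refine Submodule.mem_inf.mpr ⟨Submodule.sub_mem _ hw' hv1W, ?_⟩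
      have : w' - cc s = g + cc t := by
        rw [sub_eq_iff_eq_add] at hdecomp ⊢
        rw [hdecomp]; abel
      rw [this]
      exact Submodule.add_mem _ hg hv2G
    have hbx : π (w' - cc s) = x := by
      rw [map_sub, hw'x, hker _ hv1U, sub_zero]
    -- Step 3: a - b ∈ W ⊓ U; decompose via h4 and use h2
    set a := w - u1 with ha
    set b := w' - cc s with hb
    have habWU : a - b ∈ ratSpan Wq ⊓ ratSpan Uq := by
      refine Submodule.mem_inf.mpr ⟨Submodule.sub_mem _ (Submodule.mem_inf.mp haF).1
        (Submodule.mem_inf.mp hbG).1, ?_⟩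
      rw [← hπker, LinearMap.mem_ker, map_sub, hax, hbx, sub_self]
    obtain ⟨p, hp, q, hq, hpq⟩ := Submodule.mem_sup.mp (h4 ▸ habWU)
    obtain ⟨hpWU, hpFU⟩ := Submodule.mem_inf.mp hp
    obtain ⟨hqWU, hqG⟩ := Submodule.mem_inf.mp hq
    have hpWF : p ∈ ratSpan Wq ⊓ F :=
      Submodule.mem_inf.mpr ⟨(Submodule.mem_inf.mp hpWU).1, (Submodule.mem_inf.mp hpFU).1⟩
    have hqWG : q ∈ ratSpan Wq ⊓ conjSub F := by
      refine Submodule.mem_inf.mpr ⟨(Submodule.mem_inf.mp hqWU).1, ?_⟩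
      rw [mem_conjSub]
      exact (Submodule.mem_inf.mp (mem_conjSub.mp hqG)).1
    have hsum : a - p = b + q := by
      rw [sub_eq_iff_eq_add]
      rw [eq_comm, ← sub_eq_iff_eq_add'] at hpq
      rw [← hpq]; abel
    have hzero : a - p = 0 := by
      have h1' : a - p ∈ ratSpan Wq ⊓ F :=
        Submodule.sub_mem _ haF hpWF
      have h2' : a - p ∈ ratSpan Wq ⊓ conjSub F := by
        rw [hsum]; exact Submodule.add_mem _ hbG hqWG
      have := h2.le_bot (Submodule.mem_inf.mpr ⟨h1', h2'⟩)
      simpa using this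
    have hap : a = p := sub_eq_zero.mp hzero
    have haU : a ∈ ratSpan Uq := hap ▸ (Submodule.mem_inf.mp hpFU).2
    rw [Submodule.mem_bot, ← hax]
    exact hker a haU
  · -- surjectivity axiom
    rw [← Submodule.map_sup, ← h3, Submodule.map_top, pi_surj π hπsurj]
end
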